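/- Given positive numbers 𝔷, δ, r there exists a positive integer m̂ with the following property: if (A,a) is a KW solution on Q with |a| ≤ 𝔷/t at every point of Q and |φ| ≥ δ/t at every point with |z| ≥ r·t, then the local vanishing degree of φ at each of its zeros is at most m̂. -/

import Mathlib

open MeasureTheory Matrix Filter

noncomputable section

/-- `2×2` complex matrices; 𝔤 = su(2) and its complexification sl(2,ℂ) sit inside. -/
abbrev Mat := Matrix (Fin 2) (Fin 2) ℂ

/-- Points `(t, x₁, x₂)` of `ℝ³ ⊇ Q = (0,∞) × ℝ²`. -/
abbrev Pt := ℝ × ℝ × ℝ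

/-- The domain `Q = (0,∞) × ℝ²`. -/
def Qset : Set Pt := {p | 0 < p.1}

def dirT : Pt := (1, 0, 0)
def dirX1 : Pt := (0, 1, 0)
def dirX2 : Pt := (0, 0, 1)

/-- Euclidean norm on `ℝ²`. -/
def rnorm (z : ℝ × ℝ) : ℝ := Real.sqrt (z.1 ^ 2 + z.2 ^ 2)

/-- Hermitian norm squared `|η|² = (1/2)·trace(η η†)`. -/
def mNormSq (η : Mat) : ℝ := ((1 / 2 : ℂ) * (η * ηᴴ).trace).re

def mNorm (η : Mat) : ℝ := Real.sqrt (mNormSq η)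

/-- Inner product `⟨x,y⟩ = -(1/2)·trace(x·y)` on 𝔤. -/
def gInner (x y : Mat) : ℝ := ((-(1 / 2) : ℂ) * (x * y).trace).re

/-- Entrywise partial derivative of a matrix-valued map in direction `v`. -/
def pd (v : Pt) (f : Pt → Mat) (p : Pt) : Mat :=
  Matrix.of fun i j => fderiv ℝ (fun q => f q i j) p v

/-- Covariant derivative `∇_A f = ∂_v f + [A, f]`. -/
def covD (A : Pt → Mat) (v : Pt) (f : Pt → Mat) (p : Pt) : Mat :=
  pd v f p + (A p * f p - f p * A p)

def SmoothOnQ (f : Pt → Mat) : Prop :=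
  ∀ i j, ContDiffOn ℝ (⊤ : ℕ∞) (fun p => f p i j) Qset

/-- Taking values in 𝔤 = su(2): traceless skew-Hermitian. -/
def IsGValued (f : Pt → Mat) : Prop :=
  ∀ p ∈ Qset, (f p)ᴴ = -f p ∧ (f p).trace = 0

/-- A KW configuration: six smooth 𝔤-valued maps on `Q`. -/
structure KWConfig where
  At : Pt → Mat
  A1 : Pt → Mat
  A2 : Pt → Mat
  a1 : Pt → Mat
  a2 : Pt → Mat
  a3 : Pt → Mat
  smooth_At : SmoothOnQ At
  smooth_A1 : SmoothOnQ A1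
  smooth_A2 : SmoothOnQ A2
  smooth_a1 : SmoothOnQ a1
  smooth_a2 : SmoothOnQ a2
  smooth_a3 : SmoothOnQ a3
  gval_At : IsGValued At
  gval_A1 : IsGValued A1
  gval_A2 : IsGValued A2
  gval_a1 : IsGValued a1
  gval_a2 : IsGValued a2
  gval_a3 : IsGValued a3

namespace KWConfig

def phi (c : KWConfig) (p : Pt) : Mat := c.a1 p - Complex.I • c.a2 p

def phiStar (c : KWConfig) (p : Pt) : Mat := c.a1 p + Complex.I • c.a2 p

def E1 (c : KWConfig) (p : Pt) : Mat :=
  pd dirT c.A1 p - pd dirX1 c.At p + (c.At p * c.A1 p - c.A1 p * c.At p)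

def E2 (c : KWConfig) (p : Pt) : Mat :=
  pd dirT c.A2 p - pd dirX2 c.At p + (c.At p * c.A2 p - c.A2 p * c.At p)

def Bf (c : KWConfig) (p : Pt) : Mat :=
  pd dirX1 c.A2 p - pd dirX2 c.A1 p + (c.A1 p * c.A2 p - c.A2 p * c.A1 p)

/-- `|F_A|² = |B|² + |E₁|² + |E₂|²`. -/
def FnormSq (c : KWConfig) (p : Pt) : ℝ :=
  mNormSq (c.Bf p) + mNormSq (c.E1 p) + mNormSq (c.E2 p)

/-- `|a| = (|a₁|² + |a₂|² + |a₃|²)^{1/2}`. -/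
def aNorm (c : KWConfig) (p : Pt) : ℝ :=
  Real.sqrt (mNormSq (c.a1 p) + mNormSq (c.a2 p) + mNormSq (c.a3 p))

/-- `|∇_A a|² = Σ_j Σ_i |∇_{A_j} a_i|²`. -/
def gradaNormSq (c : KWConfig) (p : Pt) : ℝ :=
  mNormSq (covD c.At dirT c.a1 p) + mNormSq (covD c.At dirT c.a2 p) +
    mNormSq (covD c.At dirT c.a3 p) +
  mNormSq (covD c.A1 dirX1 c.a1 p) + mNormSq (covD c.A1 dirX1 c.a2 p) +
    mNormSq (covD c.A1 dirX1 c.a3 p) +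
  mNormSq (covD c.A2 dirX2 c.a1 p) + mNormSq (covD c.A2 dirX2 c.a2 p) +
    mNormSq (covD c.A2 dirX2 c.a3 p)

/-- `σ = -(1/(2|a₁|²))·[a₁,a₂]`. -/
def sig (c : KWConfig) (p : Pt) : Mat :=
  (-(1 / (2 * mNormSq (c.a1 p)))) • (c.a1 p * c.a2 p - c.a2 p * c.a1 p)

/-- `α = ⟨a₃, σ⟩`. -/
def alphaF (c : KWConfig) (p : Pt) : ℝ := gInner (c.a3 p) (c.sig p)

/-- `β = (1/2)(a₃ - α σ) + (i/4)[σ, a₃]`. -/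
def betaF (c : KWConfig) (p : Pt) : Mat :=
  (1 / 2 : ℝ) • (c.a3 p - c.alphaF p • c.sig p) +
    (Complex.I / 4) • (c.sig p * c.a3 p - c.a3 p * c.sig p)

/-- `b₁ = (1/4)[σ, ∇_{A₁}σ]`. -/
def b1 (c : KWConfig) (p : Pt) : Mat :=
  (1 / 4 : ℝ) • (c.sig p * covD c.A1 dirX1 c.sig p - covD c.A1 dirX1 c.sig p * c.sig p)

/-- `b₂ = (1/4)[σ, ∇_{A₂}σ]`. -/
def b2 (c : KWConfig) (p : Pt) : Mat :=
  (1 / 4 : ℝ) • (c.sig p * covD c.A2 dirX2 c.sig p - covD c.A2 dirX2 c.sig p * c.sig p)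

/-- `b̂ = (1/2)(b₁ + i b₂)`. -/
def bhat (c : KWConfig) (p : Pt) : Mat :=
  (1 / 2 : ℝ) • c.b1 p + (Complex.I / 2) • c.b2 p

/-- `w = (1/2) ln(√2 · t · |φ|)`. -/
def wfun (c : KWConfig) (p : Pt) : ℝ :=
  (1 / 2) * Real.log (Real.sqrt 2 * p.1 * mNorm (c.phi p))

end KWConfig

/-- The (x₃-invariant, a_t = 0) Kapustin–Witten equations. -/
def IsKWSolution (c : KWConfig) : Prop :=
  ∀ p ∈ Qset,
    covD c.At dirT c.phi p = Complex.I • (c.a3 p * c.phi p - c.phi p * c.a3 p) ∧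
    covD c.A1 dirX1 c.phi p + Complex.I • covD c.A2 dirX2 c.phi p = 0 ∧
    covD c.At dirT c.a3 p =
      c.Bf p + (Complex.I / 2) • (c.phi p * c.phiStar p - c.phiStar p * c.phi p) ∧
    c.E1 p = covD c.A2 dirX2 c.a3 p ∧
    c.E2 p = -covD c.A1 dirX1 c.a3 p

/-- A gauge transformation on `U`: a smooth SU(2)-valued map. -/
structure GaugeOn (U : Set Pt) where
  g : Pt → Mat
  smooth : ∀ i j, ContDiffOn ℝ (⊤ : ℕ∞) (fun p => g p i j) U
  unitary : ∀ p ∈ U, (g p)ᴴ * g p = 1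
  det_one : ∀ p ∈ U, (g p).det = 1

/-- Gauge action on a connection component: `A ↦ g⁻¹ A g + g⁻¹ ∂_v g` (with `g⁻¹ = gᴴ`). -/
def gaugeA (g : Pt → Mat) (A : Pt → Mat) (v : Pt) (p : Pt) : Mat :=
  (g p)ᴴ * A p * g p + (g p)ᴴ * pd v g p

/-- Gauge action on a Higgs field component: `a ↦ g⁻¹ a g`. -/
def gaugea (g : Pt → Mat) (a : Pt → Mat) (p : Pt) : Mat := (g p)ᴴ * a p * g p

/-- `c'` is the image of `c` under a gauge transformation defined on `U`. -/
def GaugeEquivOn (U : Set Pt) (c c' : KWConfig) : Prop :=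
  ∃ gt : GaugeOn U, ∀ p ∈ U,
    c'.At p = gaugeA gt.g c.At dirT p ∧
    c'.A1 p = gaugeA gt.g c.A1 dirX1 p ∧
    c'.A2 p = gaugeA gt.g c.A2 dirX2 p ∧
    c'.a1 p = gaugea gt.g c.a1 p ∧
    c'.a2 p = gaugea gt.g c.a2 p ∧
    c'.a3 p = gaugea gt.g c.a3 p

/-- Orthonormal basis of su(2) with `[σ₁,σ₂] = -2σ₃` etc. -/
def s1 : Mat := !![0, Complex.I; Complex.I, 0]
def s2 : Mat := !![0, 1; -1, 0]
def s3 : Mat := !![Complex.I, 0; 0, -Complex.I]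

/-- `Θ` with `sinh Θ = t/|z|`. -/
def thetaOf (p : Pt) : ℝ := Real.arsinh (p.1 / rnorm p.2)

/-- `(m+1)·sinh Θ / sinh((m+1)Θ)`. -/
def modelN (m : ℕ) (p : Pt) : ℝ :=
  ((m + 1 : ℝ) * Real.sinh (thetaOf p)) / Real.sinh ((m + 1 : ℝ) * thetaOf p)

/-- `((m+1)/2)·(1 - tanh Θ · coth((m+1)Θ))`. -/
def modelG (m : ℕ) (p : Pt) : ℝ :=
  ((m + 1 : ℝ) / 2) *
    (1 - (Real.sinh (thetaOf p) / Real.cosh (thetaOf p)) *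
      (Real.cosh ((m + 1 : ℝ) * thetaOf p) / Real.sinh ((m + 1 : ℝ) * thetaOf p)))

/-- The model solution `(A^{(m)}, a^{(m)})`: a KW solution with the stated formulas at `z ≠ 0`. -/
def IsModelSolution (m : ℕ) (c : KWConfig) : Prop :=
  IsKWSolution c ∧
    ∀ p ∈ Qset, p.2 ≠ (0 : ℝ × ℝ) →
      c.a3 p =
        (-(1 / (2 * p.1)) * modelN m p *
          (Real.cosh ((m + 1 : ℝ) * thetaOf p) / Real.cosh (thetaOf p))) • s3 ∧
      c.phi p =
        ((↑(-(1 / (2 * p.1)) * modelN m p) : ℂ) *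
          (((p.2.1 : ℂ) + (p.2.2 : ℂ) * Complex.I) ^ m / ((rnorm p.2 : ℝ) : ℂ) ^ m)) •
          (s1 - Complex.I • s2) ∧
      c.At p = 0 ∧
      c.A1 p = (modelG m p * (-p.2.2 / rnorm p.2 ^ 2)) • s3 ∧
      c.A2 p = (modelG m p * (p.2.1 / rnorm p.2 ^ 2)) • s3

/-- The Nahm pole imposter with parameter `w`, `|w| ≤ 1`. -/
def IsNahmImposter (w : ℂ) (c : KWConfig) : Prop :=
  IsKWSolution c ∧
    ∀ p ∈ Qset,
      c.At p = 0 ∧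
      c.A1 p + Complex.I • c.A2 p =
        ((↑(-(1 / (2 * p.1))) : ℂ) * w) • (s1 - Complex.I • s2) ∧
      c.a3 p = (-(1 / (2 * p.1))) • s3 ∧
      c.phi p =
        (-(1 / (2 * p.1)) * Real.sqrt (1 - ‖w‖ ^ 2)) • (s1 - Complex.I • s2)

/-- The Nahm pole imposter with parameter `w`, shifted in time by `τ` (`t ↦ t + τ`). -/
def IsNahmImposterShifted (τ : ℝ) (w : ℂ) (c : KWConfig) : Prop :=
  ∀ p ∈ Qset,
    c.At p = 0 ∧
    c.A1 p + Complex.I • c.A2 p =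
      ((↑(-(1 / (2 * (p.1 + τ)))) : ℂ) * w) • (s1 - Complex.I • s2) ∧
    c.a3 p = (-(1 / (2 * (p.1 + τ)))) • s3 ∧
    c.phi p =
      (-(1 / (2 * (p.1 + τ))) * Real.sqrt (1 - ‖w‖ ^ 2)) • (s1 - Complex.I • s2)

/-- `∫_{|z| ≥ R} |F_A|²` over the region `{0 < t, |z| ≥ R}` of `Q`. -/
def curvInt (c : KWConfig) (R : ℝ) : ENNReal :=
  ∫⁻ p in {p : Pt | 0 < p.1 ∧ R ≤ rnorm p.2}, ENNReal.ofReal (c.FnormSq p)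

/-- `∫_{ℝ²∖{0}} (|β|² + |b̂|²)(t, ·)`. -/
def sliceInt (c : KWConfig) (t : ℝ) : ENNReal :=
  ∫⁻ z in {z : ℝ × ℝ | z ≠ 0},
    ENNReal.ofReal (mNormSq (c.betaF (t, z)) + mNormSq (c.bhat (t, z)))

/-- `∫_{|z| ≥ R, z ≠ 0} (|β|² + |b̂|²)(t, ·)`. -/
def sliceIntFar (c : KWConfig) (t R : ℝ) : ENNReal :=
  ∫⁻ z in {z : ℝ × ℝ | z ≠ 0 ∧ R ≤ rnorm z},
    ENNReal.ofReal (mNormSq (c.betaF (t, z)) + mNormSq (c.bhat (t, z)))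

/-- Constraint Set 1. -/
def ConstraintSet1 (c : KWConfig) : Prop :=
  (∃ M : ℝ, ∀ p ∈ Qset, p.1 * c.aNorm p ≤ M) ∧
  (∃ t0 > (0 : ℝ), ∃ ε > (0 : ℝ), ∀ p ∈ Qset, p.1 < t0 → ε < p.1 * mNorm (c.a3 p)) ∧
  (∃ p ∈ Qset, c.phi p ≠ 0) ∧
  (∀ p ∈ Qset, gInner (c.a3 p) (c.a1 p) = 0 ∧ gInner (c.a3 p) (c.a2 p) = 0)

/-- Constraint Set 2. -/
def ConstraintSet2 (c : KWConfig) : Prop :=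
  (∃ M : ℝ, ∀ p ∈ Qset, p.1 * c.aNorm p ≤ M) ∧
  (∃ t0 > (0 : ℝ), ∃ ε > (0 : ℝ), ∃ r > (0 : ℝ), ∀ p ∈ Qset,
    p.1 < t0 → r * p.1 ≤ rnorm p.2 → ε < p.1 * c.aNorm p) ∧
  (∃ Ξ > (0 : ℝ), ∀ R > (0 : ℝ), curvInt c R ≤ ENNReal.ofReal (Ξ / R))

/-- Conditions (6.1) with data `(𝔷, δ, r, Ξ)`. -/
def Conds61 (z₀ δ r Ξ : ℝ) (c : KWConfig) : Prop :=
  (∀ p ∈ Qset, c.aNorm p ≤ z₀ / p.1) ∧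
  (∀ p ∈ Qset, r * p.1 < rnorm p.2 → δ / p.1 ≤ mNorm (c.phi p)) ∧
  (∀ R > (0 : ℝ), curvInt c R ≤ ENNReal.ofReal (Ξ / R))

/-- `φ(t,·)` vanishes at `q` to degree `m`: `φ(t,z) = η·(z-q)^m + O(|z-q|^{m+1})`, `η ≠ 0`. -/
def HasVanishingDegree (c : KWConfig) (t : ℝ) (q : ℝ × ℝ) (m : ℕ) : Prop :=
  ∃ η : Mat, η ≠ 0 ∧ ∃ C > (0 : ℝ), ∃ ε > (0 : ℝ), ∀ z : ℝ × ℝ, rnorm (z - q) < ε →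
    mNorm (c.phi (t, z) -
        ((((z.1 - q.1 : ℝ) : ℂ) + ((z.2 - q.2 : ℝ) : ℂ) * Complex.I) ^ m) • η) ≤
      C * rnorm (z - q) ^ (m + 1)

/-- Covariant derivative along coordinate direction `j` using the connection of `cm`. -/
def covDir (cm : KWConfig) (j : Fin 3) (f : Pt → Mat) : Pt → Mat :=
  if j = 0 then covD cm.At dirT f
  else if j = 1 then covD cm.A1 dirX1 f
  else covD cm.A2 dirX2 f

/-- Iterated covariant derivative along a list of coordinate directions. -/
def covDList (cm : KWConfig) : List (Fin 3) → (Pt → Mat) → Pt → Mat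
  | [], f => f
  | j :: L, f => covDir cm j (covDList cm L f)

/-- The model value `w^{(m)} = (1/2) ln((m+1) sinh Θ / sinh((m+1)Θ))`. -/
def wModel (m : ℕ) (p : Pt) : ℝ := (1 / 2) * Real.log (modelN m p)

end

section Helpers

attribute [local instance] Matrix.frobeniusSeminormedAddCommGroup
  Matrix.frobeniusNormedAddCommGroup Matrix.frobeniusNormedSpace
  Matrix.frobeniusNormedRing Matrix.frobeniusIsBoundedSMul

lemma mNormSq_eq_sum (η : Mat) :
    mNormSq η = (∑ i, ∑ j, Complex.normSq (η i j)) / 2 := by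
  have htr : (η * ηᴴ).trace = ((∑ i, ∑ j, Complex.normSq (η i j) : ℝ) : ℂ) := by
    simp only [Matrix.trace, Matrix.diag, Matrix.mul_apply, Matrix.conjTranspose_apply]
    push_cast
    congr 1
    ext i
    congr 1
    ext j
    rw [← Complex.mul_conj]
    rfl
  rw [mNormSq, htr]
  simp [Complex.mul_re]
  ring

lemma sum_normSq_nonneg (η : Mat) : (0:ℝ) ≤ ∑ i, ∑ j, Complex.normSq (η i j) := by
  exact Finset.sum_nonneg fun i _ => Finset.sum_nonneg fun j _ => Complex.normSq_nonneg _

lemma frob_sq (η : Mat) : ‖η‖ ^ 2 = ∑ i, ∑ j, Complex.normSq (η i j) := by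
  have h1 : ‖η‖ = Real.sqrt (∑ i, ∑ j, Complex.normSq (η i j)) := by
    rw [Matrix.frobenius_norm_def, Real.sqrt_eq_rpow]
    congr 1
    refine Finset.sum_congr rfl fun i _ => Finset.sum_congr rfl fun j _ => ?_
    rw [Real.rpow_two, Complex.sq_norm]
  rw [h1, Real.sq_sqrt (sum_normSq_nonneg η)]

lemma mNormSq_frob (η : Mat) : mNormSq η = ‖η‖ ^ 2 / 2 := by
  rw [mNormSq_eq_sum, frob_sq]

lemma mNormSq_nonneg' (η : Mat) : 0 ≤ mNormSq η := by
  rw [mNormSq_frob]; positivity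

lemma mNorm_frob (η : Mat) : mNorm η = ‖η‖ / Real.sqrt 2 := by
  rw [mNorm, mNormSq_frob]
  rw [show ‖η‖ ^ 2 / 2 = (‖η‖ / Real.sqrt 2) ^ 2 by
    rw [div_pow, Real.sq_sqrt (by norm_num : (0:ℝ) ≤ 2)]]
  exact Real.sqrt_sq (by positivity)

lemma mNorm_sq_eq (η : Mat) : mNorm η ^ 2 = mNormSq η := by
  rw [mNorm, Real.sq_sqrt (mNormSq_nonneg' η)]


def ipR (X Y : Mat) : ℝ := ∑ i, ∑ j, ((starRingEnd ℂ) (X i j) * Y i j).re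

lemma ipR_eq (X Y : Mat) : ipR X Y = ((Xᴴ * Y).trace).re := by
  rw [ipR]
  simp only [Matrix.trace, Matrix.diag, Matrix.mul_apply, Matrix.conjTranspose_apply,
    Complex.re_sum]
  rw [Finset.sum_comm]
  rfl

lemma ip_skew (X A : Mat) (hA : Aᴴ = -A) : ipR X (A * X - X * A) = 0 := by
  rw [ipR_eq]
  have e1 : (Xᴴ * (A * X - X * A))ᴴ = (A * Xᴴ - Xᴴ * A) * X := by
    simp only [Matrix.conjTranspose_mul, Matrix.conjTranspose_sub, hA,
      Matrix.conjTranspose_conjTranspose]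
    noncomm_ring
  have e2 : ((A * Xᴴ - Xᴴ * A) * X).trace = -(Xᴴ * (A * X - X * A)).trace := by
    rw [Matrix.sub_mul, Matrix.mul_sub, Matrix.trace_sub, Matrix.trace_sub]
    have c1 : (A * Xᴴ * X).trace = (Xᴴ * (X * A)).trace := by
      rw [Matrix.mul_assoc, Matrix.trace_mul_comm, Matrix.mul_assoc]
    have c2 : (Xᴴ * A * X).trace = (Xᴴ * (A * X)).trace := by rw [Matrix.mul_assoc]
    rw [c1, c2]; ring
  have h1 : (starRingEnd ℂ) ((Xᴴ * (A * X - X * A)).trace)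
      = -((Xᴴ * (A * X - X * A)).trace) := by
    have h := Matrix.trace_conjTranspose (Xᴴ * (A * X - X * A))
    rw [e1, e2] at h
    exact h.symm
  have h2 := congrArg Complex.re h1
  simp only [Complex.conj_re, Complex.neg_re] at h2
  linarith

lemma ipR_abs_le (X Y : Mat) : |ipR X Y| ≤ ‖X‖ * ‖Y‖ := by
  have h1 : |ipR X Y| ≤ ∑ i, ∑ j, ‖X i j‖ * ‖Y i j‖ := by
    refine (Finset.abs_sum_le_sum_abs _ _).trans ?_
    refine Finset.sum_le_sum fun i _ => ?_
    refine (Finset.abs_sum_le_sum_abs _ _).trans ?_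
    refine Finset.sum_le_sum fun j _ => ?_
    calc |((starRingEnd ℂ) (X i j) * Y i j).re|
        ≤ ‖(starRingEnd ℂ) (X i j) * Y i j‖ := Complex.abs_re_le_norm _
      _ = ‖X i j‖ * ‖Y i j‖ := by
          rw [norm_mul, Complex.norm_conj]
  refine h1.trans ?_
  have hXY : ∀ Z : Mat, ‖Z‖ = Real.sqrt (∑ p : Fin 2 × Fin 2, ‖Z p.1 p.2‖ ^ 2) := by
    intro Z
    have : (∑ p : Fin 2 × Fin 2, ‖Z p.1 p.2‖ ^ 2) = ∑ i, ∑ j, Complex.normSq (Z i j) := by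
      rw [← Finset.univ_product_univ, Finset.sum_product]
      refine Finset.sum_congr rfl fun i _ => Finset.sum_congr rfl fun j _ => ?_
      rw [Complex.sq_norm]
    rw [this, ← frob_sq, Real.sqrt_sq (norm_nonneg _)]
  have key := Finset.sum_mul_sq_le_sq_mul_sq Finset.univ
    (fun p : Fin 2 × Fin 2 => ‖X p.1 p.2‖) (fun p : Fin 2 × Fin 2 => ‖Y p.1 p.2‖)
  have hs : (∑ i, ∑ j, ‖X i j‖ * ‖Y i j‖)
      = ∑ p : Fin 2 × Fin 2, ‖X p.1 p.2‖ * ‖Y p.1 p.2‖ := by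
    rw [← Finset.univ_product_univ, Finset.sum_product]
  rw [hs, hXY X, hXY Y, ← Real.sqrt_mul (by positivity)]
  have hnn : (0:ℝ) ≤ ∑ p : Fin 2 × Fin 2, ‖X p.1 p.2‖ * ‖Y p.1 p.2‖ := by positivity
  calc (∑ p : Fin 2 × Fin 2, ‖X p.1 p.2‖ * ‖Y p.1 p.2‖)
      = Real.sqrt ((∑ p : Fin 2 × Fin 2, ‖X p.1 p.2‖ * ‖Y p.1 p.2‖) ^ 2) :=
        (Real.sqrt_sq hnn).symm
    _ ≤ Real.sqrt ((∑ p : Fin 2 × Fin 2, ‖X p.1 p.2‖ ^ 2) *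
          ∑ p : Fin 2 × Fin 2, ‖Y p.1 p.2‖ ^ 2) := Real.sqrt_le_sqrt key

lemma ipR_add (X Y Z : Mat) : ipR X (Y + Z) = ipR X Y + ipR X Z := by
  simp [ipR, Matrix.add_apply, mul_add, Complex.add_re, Finset.sum_add_distrib]

lemma ipR_neg (X Y : Mat) : ipR X (-Y) = -ipR X Y := by
  simp only [ipR, Matrix.neg_apply, mul_neg, Complex.neg_re, ← Finset.sum_neg_distrib]

lemma ipR_sub (X Y Z : Mat) : ipR X (Y - Z) = ipR X Y - ipR X Z := by
  rw [sub_eq_add_neg, ipR_add, ipR_neg]; ring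

lemma comm_norm_le (A X : Mat) : ‖A * X - X * A‖ ≤ 2 * ‖A‖ * ‖X‖ := by
  calc ‖A * X - X * A‖ ≤ ‖A * X‖ + ‖X * A‖ := norm_sub_le _ _
    _ ≤ ‖A‖ * ‖X‖ + ‖X‖ * ‖A‖ := add_le_add (norm_mul_le _ _) (norm_mul_le _ _)
    _ = 2 * ‖A‖ * ‖X‖ := by ring

lemma Qopen : IsOpen Qset := isOpen_lt continuous_const continuous_fst

lemma phi_entry_eq (c : KWConfig) (q : Pt) (i j : Fin 2) :
    c.phi q i j = c.a1 q i j - Complex.I * c.a2 q i j := by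
  simp [KWConfig.phi, Matrix.sub_apply, Matrix.smul_apply, smul_eq_mul]

lemma entry_diffAt (f : Pt → Mat) (hf : SmoothOnQ f) (p : Pt) (hp : p ∈ Qset) (i j : Fin 2) :
    DifferentiableAt ℝ (fun q => f q i j) p :=
  ((hf i j).contDiffAt (Qopen.mem_nhds hp)).differentiableAt (by simp)

lemma phi_entry_diffAt (c : KWConfig) (p : Pt) (hp : p ∈ Qset) (i j : Fin 2) :
    DifferentiableAt ℝ (fun q => c.phi q i j) p := by
  have h1 := entry_diffAt c.a1 c.smooth_a1 p hp i j
  have h2 := entry_diffAt c.a2 c.smooth_a2 p hp i j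
  have he : (fun q => c.phi q i j) = fun q => c.a1 q i j - Complex.I * c.a2 q i j := by
    funext q; exact phi_entry_eq c q i j
  rw [he]
  exact h1.sub (h2.const_mul _)

lemma curve_hasDeriv (z : ℝ × ℝ) (s : ℝ) :
    HasDerivAt (fun u : ℝ => ((u, z) : Pt)) dirT s := by
  have h := (hasDerivAt_id s).prodMk (hasDerivAt_const s z)
  have he : (dirT : Pt) = ((1 : ℝ), (0 : ℝ × ℝ)) := rfl
  rw [he]
  exact h

lemma entry_hasDerivAt_t (c : KWConfig) (z : ℝ × ℝ) (s : ℝ) (hs : 0 < s) (i j : Fin 2) :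
    HasDerivAt (fun u : ℝ => c.phi (u, z) i j) (pd dirT c.phi (s, z) i j) s := by
  have hp : ((s, z) : Pt) ∈ Qset := hs
  have hd := phi_entry_diffAt c (s, z) hp i j
  have h := hd.hasFDerivAt.comp_hasDerivAt s (curve_hasDeriv z s)
  exact h

lemma G_hasDerivAt (c : KWConfig) (z : ℝ × ℝ) (s : ℝ) (hs : 0 < s) :
    HasDerivAt (fun u : ℝ => mNormSq (c.phi (u, z)))
      (ipR (c.phi (s, z)) (pd dirT c.phi (s, z))) s := by
  have hrw : (fun u : ℝ => mNormSq (c.phi (u, z)))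
      = fun u => (∑ i, ∑ j, Complex.normSq (c.phi (u, z) i j)) / 2 := by
    funext u; exact mNormSq_eq_sum _
  rw [hrw]
  have key : HasDerivAt (fun u => ∑ i, ∑ j, Complex.normSq (c.phi (u, z) i j))
      (∑ i, ∑ j, 2 * ((starRingEnd ℂ) (c.phi (s, z) i j) * pd dirT c.phi (s, z) i j).re) s := by
    refine HasDerivAt.fun_sum fun i _ => HasDerivAt.fun_sum fun j _ => ?_
    have hu := entry_hasDerivAt_t c z s hs i j
    have hre : HasDerivAt (fun u => (c.phi (u, z) i j).re)
        ((pd dirT c.phi (s, z) i j).re) s :=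
      Complex.reCLM.hasFDerivAt.comp_hasDerivAt s hu
    have him : HasDerivAt (fun u => (c.phi (u, z) i j).im)
        ((pd dirT c.phi (s, z) i j).im) s :=
      Complex.imCLM.hasFDerivAt.comp_hasDerivAt s hu
    have h2 := (hre.pow 2).add (him.pow 2)
    have hfun : (fun u => Complex.normSq (c.phi (u, z) i j))
        = fun u => (c.phi (u, z) i j).re ^ 2 + (c.phi (u, z) i j).im ^ 2 := by
      funext u; rw [Complex.normSq_apply]; ring
    rw [hfun]
    convert h2 using 1
    · rfl
    rw [Complex.mul_re]
    simp only [Complex.conj_re, Complex.conj_im]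
    ring
  have h3 := key.div_const 2
  refine h3.congr_deriv ?_
  rw [ipR, Finset.sum_div]
  refine Finset.sum_congr rfl fun i _ => ?_
  rw [Finset.sum_div]
  refine Finset.sum_congr rfl fun j _ => ?_
  ring

lemma mNorm_nonneg' (η : Mat) : 0 ≤ mNorm η := Real.sqrt_nonneg _

lemma mNorm_a3_le (c : KWConfig) (p : Pt) : mNorm (c.a3 p) ≤ c.aNorm p := by
  refine Real.sqrt_le_sqrt ?_
  have h1 := mNormSq_nonneg' (c.a1 p)
  have h2 := mNormSq_nonneg' (c.a2 p)
  linarith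

lemma norm_eq_sqrt2_mNorm (η : Mat) : ‖η‖ = Real.sqrt 2 * mNorm η := by
  rw [mNorm_frob]
  field_simp

lemma sqrt2_le : Real.sqrt 2 ≤ 1.5 := by
  nlinarith [Real.sq_sqrt (by norm_num : (0:ℝ) ≤ 2), Real.sqrt_nonneg 2]

lemma deriv_lower (c : KWConfig) (hKW : IsKWSolution c) (z₀ : ℝ) (hz₀ : 0 < z₀)
    (hA : ∀ p ∈ Qset, c.aNorm p ≤ z₀ / p.1) (z : ℝ × ℝ) (s : ℝ) (hs : 0 < s) :
    -(6 * z₀ / s * mNormSq (c.phi (s, z)))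
      ≤ ipR (c.phi (s, z)) (pd dirT c.phi (s, z)) := by
  have hp : ((s, z) : Pt) ∈ Qset := hs
  obtain ⟨h1, -, -, -, -⟩ := hKW (s, z) hp
  unfold covD at h1
  have hpd : pd dirT c.phi (s, z)
      = Complex.I • (c.a3 (s, z) * c.phi (s, z) - c.phi (s, z) * c.a3 (s, z))
        - (c.At (s, z) * c.phi (s, z) - c.phi (s, z) * c.At (s, z)) :=
    eq_sub_of_add_eq h1
  rw [hpd, ipR_sub, ip_skew _ _ (c.gval_At (s, z) hp).1, sub_zero]
  set X := c.phi (s, z)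
  set Y := Complex.I • (c.a3 (s, z) * X - X * c.a3 (s, z))
  have hb : |ipR X Y| ≤ ‖X‖ * ‖Y‖ := ipR_abs_le X Y
  have hY : ‖Y‖ ≤ 2 * ‖c.a3 (s, z)‖ * ‖X‖ := by
    have := comm_norm_le (c.a3 (s, z)) X
    calc ‖Y‖ = ‖Complex.I‖ * ‖c.a3 (s, z) * X - X * c.a3 (s, z)‖ := norm_smul _ _
      _ = ‖c.a3 (s, z) * X - X * c.a3 (s, z)‖ := by rw [Complex.norm_I, one_mul]
      _ ≤ 2 * ‖c.a3 (s, z)‖ * ‖X‖ := this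
  have ha3 : ‖c.a3 (s, z)‖ ≤ Real.sqrt 2 * (z₀ / s) := by
    rw [norm_eq_sqrt2_mNorm]
    have := (mNorm_a3_le c (s, z)).trans (hA (s, z) hp)
    have h2 : (0:ℝ) ≤ Real.sqrt 2 := Real.sqrt_nonneg 2
    exact mul_le_mul_of_nonneg_left this h2
  have hXsq : ‖X‖ ^ 2 = 2 * mNormSq X := by rw [mNormSq_frob]; ring
  have hzs : 0 < z₀ / s := div_pos hz₀ hs
  have hXn : 0 ≤ ‖X‖ := norm_nonneg _
  have key : ‖X‖ * ‖Y‖ ≤ 6 * z₀ / s * mNormSq X := by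
    have c1 : ‖X‖ * ‖Y‖ ≤ ‖X‖ * (2 * ‖c.a3 (s, z)‖ * ‖X‖) :=
      mul_le_mul_of_nonneg_left hY hXn
    have c2 : ‖X‖ * (2 * ‖c.a3 (s, z)‖ * ‖X‖) = 2 * ‖c.a3 (s, z)‖ * ‖X‖ ^ 2 := by ring
    have c3 : 2 * ‖c.a3 (s, z)‖ * ‖X‖ ^ 2 ≤ 2 * (Real.sqrt 2 * (z₀ / s)) * ‖X‖ ^ 2 := by
      have h4 : (0:ℝ) ≤ ‖X‖ ^ 2 := by positivity
      nlinarith [norm_nonneg (c.a3 (s, z))]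
    have c4 : 2 * (Real.sqrt 2 * (z₀ / s)) * ‖X‖ ^ 2 ≤ 2 * (1.5 * (z₀ / s)) * ‖X‖ ^ 2 := by
      have h4 : (0:ℝ) ≤ ‖X‖ ^ 2 := by positivity
      have h5 : (0:ℝ) ≤ (1.5 - Real.sqrt 2) * ((z₀ / s) * ‖X‖ ^ 2) :=
        mul_nonneg (by linarith [sqrt2_le]) (mul_nonneg hzs.le h4)
      nlinarith [h5]
    have c5 : 2 * (1.5 * (z₀ / s)) * ‖X‖ ^ 2 = 6 * z₀ / s * mNormSq X := by
      rw [hXsq]; ring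
    linarith
  have := neg_abs_le (ipR X Y)
  linarith [abs_le.mp hb]

lemma G_mono (c : KWConfig) (hKW : IsKWSolution c) (z₀ : ℝ) (hz₀ : 0 < z₀)
    (hA : ∀ p ∈ Qset, c.aNorm p ≤ z₀ / p.1) (k : ℕ) (hk : 6 * z₀ ≤ (k : ℝ))
    (hk1 : 1 ≤ k) (z : ℝ × ℝ) (t₁ t : ℝ) (h1 : 0 < t₁) (hle : t₁ ≤ t) :
    mNormSq (c.phi (t₁, z)) * t₁ ^ k ≤ mNormSq (c.phi (t, z)) * t ^ k := by
  obtain ⟨k', rfl⟩ : ∃ k', k = k' + 1 := ⟨k - 1, (Nat.succ_pred_eq_of_pos hk1).symm⟩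
  set F : ℝ → ℝ := fun u => mNormSq (c.phi (u, z)) * u ^ (k' + 1) with hFdef
  have hDF : ∀ u : ℝ, 0 < u → HasDerivAt F
      (ipR (c.phi (u, z)) (pd dirT c.phi (u, z)) * u ^ (k' + 1)
        + mNormSq (c.phi (u, z)) * ((k' + 1 : ℕ) * u ^ k')) u := by
    intro u hu
    exact (G_hasDerivAt c z u hu).mul (hasDerivAt_pow (k' + 1) u)
  have hnn : ∀ u : ℝ, 0 < u →
      0 ≤ ipR (c.phi (u, z)) (pd dirT c.phi (u, z)) * u ^ (k' + 1)
        + mNormSq (c.phi (u, z)) * ((k' + 1 : ℕ) * u ^ k') := by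
    intro u hu
    have hd := deriv_lower c hKW z₀ hz₀ hA z u hu
    have hG := mNormSq_nonneg' (c.phi (u, z))
    have hup : (0:ℝ) < u ^ k' := pow_pos hu k'
    have e1 : (u : ℝ) ^ (k' + 1) = u ^ k' * u := by ring
    have step : -(6 * z₀ / u * mNormSq (c.phi (u, z))) * u ^ (k' + 1)
        ≤ ipR (c.phi (u, z)) (pd dirT c.phi (u, z)) * u ^ (k' + 1) := by
      have := pow_pos hu (k' + 1)
      nlinarith
    have e2 : -(6 * z₀ / u * mNormSq (c.phi (u, z))) * u ^ (k' + 1)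
        = -(6 * z₀) * mNormSq (c.phi (u, z)) * u ^ k' := by
      rw [e1]; field_simp
    have hkk : 6 * z₀ ≤ ((k' + 1 : ℕ) : ℝ) := hk
    have hGU : 0 ≤ mNormSq (c.phi (u, z)) * u ^ k' := mul_nonneg hG hup.le
    have h5 : 6 * z₀ * (mNormSq (c.phi (u, z)) * u ^ k')
        ≤ ((k' + 1 : ℕ) : ℝ) * (mNormSq (c.phi (u, z)) * u ^ k') :=
      mul_le_mul_of_nonneg_right hkk hGU
    have step2 : -(6 * z₀) * mNormSq (c.phi (u, z)) * u ^ k'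
        ≤ ipR (c.phi (u, z)) (pd dirT c.phi (u, z)) * u ^ (k' + 1) := by
      rw [← e2]; exact step
    push_cast at h5 ⊢
    nlinarith [h5, step2]
  have hmono : MonotoneOn F (Set.Icc t₁ t) := by
    refine monotoneOn_of_deriv_nonneg (convex_Icc t₁ t) ?_ ?_ ?_
    · intro x hx
      exact ((hDF x (lt_of_lt_of_le h1 hx.1)).continuousAt).continuousWithinAt
    · intro x hx
      rw [interior_Icc] at hx
      exact ((hDF x (lt_of_lt_of_le h1 hx.1.le)).differentiableAt).differentiableWithinAt
    · intro x hx
      rw [interior_Icc] at hx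
      have hx0 : 0 < x := lt_of_lt_of_le h1 hx.1.le
      rw [(hDF x hx0).deriv]
      exact hnn x hx0
  exact hmono (Set.left_mem_Icc.mpr hle) (Set.right_mem_Icc.mpr hle) hle

lemma G_lb (c : KWConfig) (hKW : IsKWSolution c) (z₀ δ r : ℝ) (hz₀ : 0 < z₀)
    (hδ : 0 < δ) (hr : 0 < r)
    (hA : ∀ p ∈ Qset, c.aNorm p ≤ z₀ / p.1)
    (hfar : ∀ p ∈ Qset, r * p.1 ≤ rnorm p.2 → δ / p.1 ≤ mNorm (c.phi p))
    (k : ℕ) (hk : 6 * z₀ ≤ (k : ℝ)) (hk1 : 1 ≤ k)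
    (z : ℝ × ℝ) (t₁ t : ℝ) (h1 : 0 < t₁) (hle : t₁ ≤ t) (hfarz : r * t₁ ≤ rnorm z) :
    (δ / t₁) ^ 2 * t₁ ^ k ≤ mNormSq (c.phi (t, z)) * t ^ k := by
  have hp : ((t₁, z) : Pt) ∈ Qset := h1
  have hlow := hfar (t₁, z) hp hfarz
  have hsq : (δ / t₁) ^ 2 ≤ mNormSq (c.phi (t₁, z)) := by
    rw [← mNorm_sq_eq]
    have h0 : 0 ≤ δ / t₁ := le_of_lt (div_pos hδ h1)
    nlinarith
  calc (δ / t₁) ^ 2 * t₁ ^ k ≤ mNormSq (c.phi (t₁, z)) * t₁ ^ k := by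
        have := pow_pos h1 k
        nlinarith
    _ ≤ mNormSq (c.phi (t, z)) * t ^ k := G_mono c hKW z₀ hz₀ hA k hk hk1 z t₁ t h1 hle

lemma mNorm_le_sub_add (X W : Mat) : mNorm X ≤ mNorm (X - W) + mNorm W := by
  rw [mNorm_frob, mNorm_frob, mNorm_frob, ← add_div]
  have h : ‖X‖ ≤ ‖X - W‖ + ‖W‖ := by
    calc ‖X‖ = ‖X - W + W‖ := by rw [sub_add_cancel]
      _ ≤ ‖X - W‖ + ‖W‖ := norm_add_le _ _
  exact (div_le_div_iff_of_pos_right (by positivity)).mpr h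

lemma mNorm_smul (a : ℂ) (X : Mat) : mNorm (a • X) = ‖a‖ * mNorm X := by
  rw [mNorm_frob, mNorm_frob, norm_smul, mul_div_assoc]

lemma rnorm_zero : rnorm (0 : ℝ × ℝ) = 0 := by simp [rnorm]

lemma rnorm_pos {z : ℝ × ℝ} (h : z ≠ 0) : 0 < rnorm z := by
  rw [rnorm]
  apply Real.sqrt_pos.mpr
  have hne : z.1 ≠ 0 ∨ z.2 ≠ 0 := by
    by_contra h'
    push_neg at h'
    exact h (Prod.ext h'.1 h'.2)
  rcases hne with h1 | h2
  · have := abs_pos.mpr h1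
    nlinarith [sq_nonneg z.2, abs_nonneg z.1, sq_abs z.1]
  · have := abs_pos.mpr h2
    nlinarith [sq_nonneg z.1, abs_nonneg z.2, sq_abs z.2]

lemma rnorm_mk (a : ℝ) (ha : 0 ≤ a) : rnorm (a, 0) = a := by
  rw [rnorm]
  simp only [ne_eq, OfNat.ofNat_ne_zero, not_false_eq_true, zero_pow, add_zero]
  rw [Real.sqrt_sq ha]

lemma abs_w (z q : ℝ × ℝ) :
    ‖((z.1 - q.1 : ℝ) : ℂ) + ((z.2 - q.2 : ℝ) : ℂ) * Complex.I‖
      = rnorm (z - q) := by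
  rw [Complex.norm_def, Complex.normSq_apply, rnorm]
  simp only [Complex.add_re, Complex.ofReal_re, Complex.mul_re, Complex.I_re, Complex.I_im,
    Complex.ofReal_im, Complex.add_im, Complex.mul_im, Prod.fst_sub, Prod.snd_sub]
  ring_nf

end Helpers

set_option maxHeartbeats 1000000 in
lemma case_q0 (z₀ δ r : ℝ) (hz₀ : 0 < z₀) (hδ : 0 < δ) (hr : 0 < r)
    (c : KWConfig) (hKW : IsKWSolution c)
    (hA : ∀ p ∈ Qset, c.aNorm p ≤ z₀ / p.1)
    (hfar : ∀ p ∈ Qset, r * p.1 ≤ rnorm p.2 → δ / p.1 ≤ mNorm (c.phi p))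
    (t : ℝ) (ht : 0 < t) (m : ℕ) (k : ℕ) (hk : 6 * z₀ ≤ (k : ℝ)) (hk1 : 1 ≤ k)
    (hmk : k < m) (hm1 : m ≠ 0)
    (η : Mat) (hη : η ≠ 0) (C : ℝ) (hC : 0 < C) (ε : ℝ) (hε : 0 < ε)
    (hbd : ∀ z : ℝ × ℝ, rnorm (z - (0:ℝ×ℝ)) < ε →
      mNorm (c.phi (t, z) -
          ((((z.1 - (0:ℝ×ℝ).1 : ℝ) : ℂ) + ((z.2 - (0:ℝ×ℝ).2 : ℝ) : ℂ) * Complex.I) ^ m) • η) ≤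
        C * rnorm (z - (0:ℝ×ℝ)) ^ (m + 1)) : False := by
  set B := mNorm η + C with hBdef
  have hB : 0 < B := by
    have := mNorm_nonneg' η
    rw [hBdef]; linarith
  set CC := B ^ 2 * r ^ (2 * m) * t ^ k with hCCdef
  have hCC0 : 0 < CC := by positivity
  clear_value CC
  set t₀ := min (min (t / 2) (ε / (2 * r))) (min (min 1 (1 / (2 * r))) (δ ^ 2 / (2 * (CC + 1)))) with ht₀def
  have ht₀ : 0 < t₀ := by
    refine lt_min (lt_min (by positivity) (by positivity)) (lt_min (lt_min ?_ ?_) ?_) <;> positivity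
  have ht₀t2 : t₀ ≤ t / 2 := (min_le_left _ _).trans (min_le_left _ _)
  have ht₀e : t₀ ≤ ε / (2 * r) := (min_le_left _ _).trans (min_le_right _ _)
  have ht₀1 : t₀ ≤ 1 := (min_le_right _ _).trans ((min_le_left _ _).trans (min_le_left _ _))
  have ht₀r : t₀ ≤ 1 / (2 * r) := (min_le_right _ _).trans ((min_le_left _ _).trans (min_le_right _ _))
  have ht₀d : t₀ ≤ δ ^ 2 / (2 * (CC + 1)) := (min_le_right _ _).trans (min_le_right _ _)
  clear_value t₀
  set s := r * t₀ with hsdef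
  have hs0 : 0 < s := by positivity
  clear_value s
  set z : ℝ × ℝ := (s, 0) with hzdef
  have hrz : rnorm z = s := rnorm_mk s hs0.le
  clear_value z
  have ht₀t : t₀ ≤ t := by linarith
  have hfarz : r * t₀ ≤ rnorm z := by rw [hrz, hsdef]
  have hLB := G_lb c hKW z₀ δ r hz₀ hδ hr hA hfar k hk hk1 z t₀ t ht₀ ht₀t hfarz
  -- upper bound from vanishing degree
  have hzsub : rnorm (z - 0) = s := by rw [sub_zero, hrz]
  have hse : s < ε := by
    have h2 : s ≤ ε / 2 := by
      rw [hsdef]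
      calc r * t₀ ≤ r * (ε / (2 * r)) := by nlinarith [ht₀e]
        _ = ε / 2 := by field_simp
    linarith
  have hs1 : s ≤ 1 := by
    have h2 : s ≤ 1 / 2 := by
      rw [hsdef]
      calc r * t₀ ≤ r * (1 / (2 * r)) := by nlinarith [ht₀r]
        _ = 1 / 2 := by field_simp
    linarith
  have hupper : mNorm (c.phi (t, z)) ≤ s ^ m * B := by
    have hW := hbd z (by rw [hzsub]; exact hse)
    rw [hzsub] at hW
    have htri := mNorm_le_sub_add (c.phi (t, z))
      (((((z.1 - (0:ℝ×ℝ).1 : ℝ) : ℂ) + ((z.2 - (0:ℝ×ℝ).2 : ℝ) : ℂ) * Complex.I) ^ m) • η)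
    have hWn : mNorm (((((z.1 - (0:ℝ×ℝ).1 : ℝ) : ℂ) + ((z.2 - (0:ℝ×ℝ).2 : ℝ) : ℂ) * Complex.I) ^ m) • η)
        = s ^ m * mNorm η := by
      rw [mNorm_smul, norm_pow]
      have : ‖(((z.1 - (0:ℝ×ℝ).1 : ℝ) : ℂ) + ((z.2 - (0:ℝ×ℝ).2 : ℝ) : ℂ) * Complex.I)‖ = s := by
        rw [abs_w, hzsub]
      rw [this]
    have hsm : (0:ℝ) ≤ s ^ m := by positivity
    have hfin : C * s ^ (m + 1) ≤ s ^ m * C := by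
      rw [pow_succ]
      have h7 : C * s ^ m * s ≤ C * s ^ m * 1 :=
        mul_le_mul_of_nonneg_left hs1 (mul_nonneg hC.le hsm)
      nlinarith [h7]
    calc mNorm (c.phi (t, z)) ≤ _ := htri
      _ ≤ C * s ^ (m + 1) + s ^ m * mNorm η := by rw [hWn]; linarith [hW]
      _ ≤ s ^ m * C + s ^ m * mNorm η := by linarith
      _ = s ^ m * B := by rw [hBdef]; ring
  have hGle : mNormSq (c.phi (t, z)) ≤ s ^ (2 * m) * B ^ 2 := by
    rw [← mNorm_sq_eq]
    have h0 := mNorm_nonneg' (c.phi (t, z))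
    have : (s ^ m * B) ^ 2 = s ^ (2 * m) * B ^ 2 := by
      rw [two_mul, pow_add]; ring
    nlinarith
  -- combine
  have step1 : (δ / t₀) ^ 2 * t₀ ^ k ≤ CC * t₀ ^ (2 * m) := by
    have h2 : mNormSq (c.phi (t, z)) * t ^ k ≤ s ^ (2 * m) * B ^ 2 * t ^ k := by
      have := pow_pos ht k
      nlinarith
    have h3 : s ^ (2 * m) * B ^ 2 * t ^ k = CC * t₀ ^ (2 * m) := by
      rw [hCCdef, hsdef, mul_pow]; ring
    linarith [hLB]
  have step2 : δ ^ 2 * t₀ ^ k ≤ CC * t₀ ^ (2 * m) * t₀ ^ 2 := by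
    have h4 := mul_le_mul_of_nonneg_right step1 (sq_nonneg t₀)
    have h5 : (δ / t₀) ^ 2 * t₀ ^ k * t₀ ^ 2 = δ ^ 2 * t₀ ^ k := by
      field_simp
    linarith [h4, h5.symm.le]
  set e : ℕ := 2 * m + 2 - k with hedef
  have hke : k + e = 2 * m + 2 := by omega
  have he1 : 1 ≤ e := by omega
  have step3 : CC * t₀ ^ (2 * m) * t₀ ^ 2 = CC * t₀ ^ e * t₀ ^ k := by
    rw [mul_assoc, mul_assoc, ← pow_add, ← pow_add]
    congr 2
    omega
  have step4 : δ ^ 2 ≤ CC * t₀ ^ e := by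
    have h6 : δ ^ 2 * t₀ ^ k ≤ CC * t₀ ^ e * t₀ ^ k := by rw [← step3]; exact step2
    exact le_of_mul_le_mul_right h6 (pow_pos ht₀ k)
  have step5 : t₀ ^ e ≤ t₀ := by
    calc t₀ ^ e ≤ t₀ ^ 1 := pow_le_pow_of_le_one ht₀.le ht₀1 he1
      _ = t₀ := pow_one t₀
  have final : δ ^ 2 ≤ CC * (δ ^ 2 / (2 * (CC + 1))) := by
    calc δ ^ 2 ≤ CC * t₀ ^ e := step4
      _ ≤ CC * t₀ := mul_le_mul_of_nonneg_left step5 hCC0.le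
      _ ≤ CC * (δ ^ 2 / (2 * (CC + 1))) := mul_le_mul_of_nonneg_left ht₀d hCC0.le
  have hd2 : 0 < δ ^ 2 := by positivity
  rw [div_eq_mul_inv] at final
  have hpos : 0 < 2 * (CC + 1) := by positivity
  have : CC * (δ ^ 2 * (2 * (CC + 1))⁻¹) * (2 * (CC + 1)) = CC * δ ^ 2 := by
    field_simp
  nlinarith [final, hpos, hd2]
set_option maxHeartbeats 1000000 in
lemma case_qne (z₀ δ r : ℝ) (hz₀ : 0 < z₀) (hδ : 0 < δ) (hr : 0 < r)
    (c : KWConfig) (hKW : IsKWSolution c)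
    (hA : ∀ p ∈ Qset, c.aNorm p ≤ z₀ / p.1)
    (hfar : ∀ p ∈ Qset, r * p.1 ≤ rnorm p.2 → δ / p.1 ≤ mNorm (c.phi p))
    (t : ℝ) (ht : 0 < t) (q : ℝ × ℝ) (hq : q ≠ 0) (m : ℕ) (k : ℕ)
    (hk : 6 * z₀ ≤ (k : ℝ)) (hk1 : 1 ≤ k) (hm1 : m ≠ 0)
    (η : Mat) (hη : η ≠ 0) (C : ℝ) (hC : 0 < C) (ε : ℝ) (hε : 0 < ε)
    (hbd : ∀ z : ℝ × ℝ, rnorm (z - q) < ε →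
      mNorm (c.phi (t, z) -
          ((((z.1 - q.1 : ℝ) : ℂ) + ((z.2 - q.2 : ℝ) : ℂ) * Complex.I) ^ m) • η) ≤
        C * rnorm (z - q) ^ (m + 1)) : False := by
  have hq0 : 0 < rnorm q := rnorm_pos hq
  set t₁ := min t (rnorm q / r) with ht₁def
  have h1 : 0 < t₁ := lt_min ht (div_pos hq0 hr)
  have hle : t₁ ≤ t := min_le_left _ _
  have hrne : r ≠ 0 := ne_of_gt hr
  have hfq : r * t₁ ≤ rnorm q := by
    have h2 := min_le_right t (rnorm q / r)
    have h3 : r * t₁ ≤ r * (rnorm q / r) := mul_le_mul_of_nonneg_left h2 hr.le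
    have h4 : r * (rnorm q / r) = rnorm q := by field_simp
    linarith
  clear_value t₁
  have hLB := G_lb c hKW z₀ δ r hz₀ hδ hr hA hfar k hk hk1 q t₁ t h1 hle hfq
  have hzq : rnorm (q - q) = 0 := by rw [sub_self, rnorm_zero]
  have hz := hbd q (by rw [hzq]; exact hε)
  have hzero : mNorm (c.phi (t, q)) ≤ 0 := by
    have e0 : (((q.1 - q.1 : ℝ) : ℂ) + ((q.2 - q.2 : ℝ) : ℂ) * Complex.I) = 0 := by
      simp
    rw [e0, zero_pow hm1, zero_smul, sub_zero, hzq] at hz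
    have : (0:ℝ) ^ (m + 1) = 0 := by
      rw [zero_pow]; omega
    rw [this, mul_zero] at hz
    exact hz
  have hG0 : mNormSq (c.phi (t, q)) ≤ 0 := by
    rw [← mNorm_sq_eq]
    nlinarith [mNorm_nonneg' (c.phi (t, q))]
  have hp1 : 0 < (δ / t₁) ^ 2 * t₁ ^ k := by positivity
  have hp2 : mNormSq (c.phi (t, q)) * t ^ k ≤ 0 := by
    have := pow_pos ht k
    nlinarith
  linarith

/-- Lemma 5.6: a priori upper bound `m̂` on local vanishing degrees of `φ`. -/
theorem statement12 (z₀ δ r : ℝ) (hz₀ : 0 < z₀) (hδ : 0 < δ) (hr : 0 < r) :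
    ∃ mhat : ℕ, 1 ≤ mhat ∧
      ∀ c : KWConfig, IsKWSolution c →
        (∀ p ∈ Qset, c.aNorm p ≤ z₀ / p.1) →
        (∀ p ∈ Qset, r * p.1 ≤ rnorm p.2 → δ / p.1 ≤ mNorm (c.phi p)) →
        ∀ t > (0 : ℝ), ∀ q : ℝ × ℝ, ∀ m : ℕ,
          HasVanishingDegree c t q m → m ≤ mhat := by
  refine ⟨Nat.ceil (6 * z₀) + 2, by omega, ?_⟩
  intro c hKW hA hfar t ht q m hdeg
  by_contra hcon
  have hmk : Nat.ceil (6 * z₀) + 2 < m := not_le.mp hcon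
  set k : ℕ := Nat.ceil (6 * z₀) + 2 with hkdef
  have hk : 6 * z₀ ≤ (k : ℝ) := by
    have h := Nat.le_ceil (6 * z₀)
    have h2 : ((Nat.ceil (6 * z₀) : ℕ) : ℝ) ≤ (k : ℝ) := by
      rw [hkdef]; push_cast; linarith
    linarith
  have hk1 : 1 ≤ k := by omega
  have hm1 : m ≠ 0 := by omega
  obtain ⟨η, hη, C, hC, ε, hε, hbd⟩ := hdeg
  by_cases hq : q = 0
  · subst hq
    exact case_q0 z₀ δ r hz₀ hδ hr c hKW hA hfar t ht m k hk hk1 hmk hm1 η hη C hC ε hε hbd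
  · exact case_qne z₀ δ r hz₀ hδ hr c hKW hA hfar t ht q hq m k hk hk1 hm1 η hη C hC ε hε hbd
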